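/- Let k be a field of characteristic 0 and let A be a Poisson algebra over k whose module of Kähler differentials Ω_{A/k} is free over A with basis (dx_1, …, dx_ℓ). Define a k-bilinear operation {·,·}_ω : A × A → A by {m, a}_ω = −{a, m} + m·tr(a). Then {·,·}_ω makes A into a right Poisson module over A; explicitly, for all m, a, b ∈ A: (i) {m, ab}_ω = a·{m, b}_ω + b·{m, a}_ω; (ii) {a·m, b}_ω = a·{m, b}_ω + m·{a, b}; (iii) {{m, a}_ω, b}_ω − {{m, b}_ω, a}_ω = {m, {a, b}}_ω. -/

import Mathlib

/-!
With `∂ᵢ` the partial derivatives dual to the basis `dxᵢ`, `tr y = ∑ᵢ ∂ᵢ {y, xᵢ}` is the divergence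
of the Hamiltonian derivation `{y, ·}`. The divergence satisfies `div (a • D) = a div D + D a` and,
because the `∂ᵢ` commute (the basis is exact), `div ⁅D₁, D₂⁆ = D₁ (div D₂) - D₂ (div D₁)`. Since
`a ↦ {a, ·}` sends `ab` to `a • {b, ·} + b • {a, ·}` and, by Jacobi, brackets to commutators,
`tr` is a Poisson derivation: `tr (ab) = a tr b + b tr a` and `tr {a, b} = {a, tr b} - {b, tr a}`.
For any such `τ`, the bracket `{m, a}_τ = -{a, m} + m τ a` satisfies the right Poisson module
identities by a direct computation with Leibniz and Jacobi.
-/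

section Coordinates

variable {R A ι : Type*} [CommRing R] [CommRing A] [Algebra R A]

noncomputable def coordDerivation (b : Module.Basis ι A Ω[A⁄R]) (i : ι) : Derivation R A A :=
  (b.coord i).compDer (KaehlerDifferential.D R A)

lemma coordDerivation_apply (b : Module.Basis ι A Ω[A⁄R]) (i : ι) (a : A) :
    coordDerivation b i a = b.repr (KaehlerDifferential.D R A a) i :=
  rfl

lemma coordDerivation_apply_of_basis_eq_D [DecidableEq ι] (b : Module.Basis ι A Ω[A⁄R])
    (x : ι → A) (hb : ∀ i, b i = KaehlerDifferential.D R A (x i)) (i j : ι) :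
    coordDerivation b i (x j) = if j = i then 1 else 0 := by
  rw [coordDerivation_apply, ← hb, b.repr_self, Finsupp.single_apply]

variable [Fintype ι]

lemma Derivation.apply_eq_sum_coordDerivation_mul (b : Module.Basis ι A Ω[A⁄R]) (x : ι → A)
    (hb : ∀ i, b i = KaehlerDifferential.D R A (x i)) (D : Derivation R A A) (a : A) :
    D a = ∑ i, coordDerivation b i a * D (x i) := by
  calc D a = D.liftKaehlerDifferential (KaehlerDifferential.D R A a) :=
        (D.liftKaehlerDifferential_comp_D a).symm
    _ = D.liftKaehlerDifferential (∑ i, b.repr (KaehlerDifferential.D R A a) i • b i) := by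
        rw [b.sum_repr]
    _ = ∑ i, coordDerivation b i a * D (x i) := by
        simp only [map_sum, LinearMap.map_smul, hb, Derivation.liftKaehlerDifferential_comp_D,
          smul_eq_mul, coordDerivation_apply]

/-- The commutator is a derivation vanishing on every `x j`, hence zero. -/
lemma coordDerivation_comm (b : Module.Basis ι A Ω[A⁄R]) (x : ι → A)
    (hb : ∀ i, b i = KaehlerDifferential.D R A (x i)) (i j : ι) (a : A) :
    coordDerivation b i (coordDerivation b j a) = coordDerivation b j (coordDerivation b i a) := by
  classical
  have h := Derivation.apply_eq_sum_coordDerivation_mul b x hb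
    ⁅coordDerivation b i, coordDerivation b j⁆ a
  simp only [Derivation.commutator_apply, coordDerivation_apply_of_basis_eq_D b x hb, apply_ite,
    Derivation.map_one_eq_zero, map_zero, sub_self, ite_self, mul_zero,
    Finset.sum_const_zero] at h
  exact sub_eq_zero.mp h

noncomputable def divergence (b : Module.Basis ι A Ω[A⁄R]) (x : ι → A) (D : Derivation R A A) :
    A :=
  ∑ i, coordDerivation b i (D (x i))

lemma divergence_add (b : Module.Basis ι A Ω[A⁄R]) (x : ι → A) (D₁ D₂ : Derivation R A A) :
    divergence b x (D₁ + D₂) = divergence b x D₁ + divergence b x D₂ := by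
  simp only [divergence, Derivation.add_apply, map_add, Finset.sum_add_distrib]

lemma divergence_smul (b : Module.Basis ι A Ω[A⁄R]) (x : ι → A)
    (hb : ∀ i, b i = KaehlerDifferential.D R A (x i)) (a : A) (D : Derivation R A A) :
    divergence b x (a • D) = a * divergence b x D + D a := by
  rw [D.apply_eq_sum_coordDerivation_mul b x hb a, divergence, divergence, Finset.mul_sum,
    ← Finset.sum_add_distrib]
  refine Finset.sum_congr rfl fun i _ => ?_
  rw [Derivation.smul_apply, smul_eq_mul, Derivation.leibniz, smul_eq_mul, smul_eq_mul,
    mul_comm (D _)]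

/-- The second-order terms of `∑ᵢ ∂ᵢ (D₁ (D₂ xᵢ))` assemble into `D₁ (div D₂)`; what is left is
symmetric in `D₁, D₂`. -/
lemma sum_coordDerivation_apply_apply (b : Module.Basis ι A Ω[A⁄R]) (x : ι → A)
    (hb : ∀ i, b i = KaehlerDifferential.D R A (x i)) (D₁ D₂ : Derivation R A A) :
    ∑ i, coordDerivation b i (D₁ (D₂ (x i))) = D₁ (divergence b x D₂) +
      ∑ i, ∑ j, coordDerivation b j (D₂ (x i)) * coordDerivation b i (D₁ (x j)) := by
  have expand : ∀ i, coordDerivation b i (D₁ (D₂ (x i))) =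
      ∑ j, (D₁ (x j) * coordDerivation b i (coordDerivation b j (D₂ (x i))) +
        coordDerivation b j (D₂ (x i)) * coordDerivation b i (D₁ (x j))) := by
    intro i
    rw [D₁.apply_eq_sum_coordDerivation_mul b x hb, map_sum]
    simp only [Derivation.leibniz, smul_eq_mul, add_comm]
  have second_order : D₁ (divergence b x D₂) =
      ∑ i, ∑ j, D₁ (x j) * coordDerivation b i (coordDerivation b j (D₂ (x i))) := by
    rw [D₁.apply_eq_sum_coordDerivation_mul b x hb, divergence, Finset.sum_comm]
    refine Finset.sum_congr rfl fun j _ => ?_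
    rw [map_sum, Finset.sum_mul]
    exact Finset.sum_congr rfl fun i _ => by rw [coordDerivation_comm b x hb, mul_comm]
  simp only [expand, Finset.sum_add_distrib, second_order]

lemma divergence_lie (b : Module.Basis ι A Ω[A⁄R]) (x : ι → A)
    (hb : ∀ i, b i = KaehlerDifferential.D R A (x i)) (D₁ D₂ : Derivation R A A) :
    divergence b x ⁅D₁, D₂⁆ = D₁ (divergence b x D₂) - D₂ (divergence b x D₁) := by
  have cross_symm : ∑ i, ∑ j, coordDerivation b j (D₂ (x i)) * coordDerivation b i (D₁ (x j)) =
      ∑ i, ∑ j, coordDerivation b j (D₁ (x i)) * coordDerivation b i (D₂ (x j)) := by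
    rw [Finset.sum_comm]
    exact Finset.sum_congr rfl fun _ _ => Finset.sum_congr rfl fun _ _ => mul_comm _ _
  rw [divergence]
  simp only [Derivation.commutator_apply, map_sub, Finset.sum_sub_distrib]
  rw [sum_coordDerivation_apply_apply b x hb, sum_coordDerivation_apply_apply b x hb, cross_symm]
  ring

end Coordinates

section Poisson

variable {R A : Type*} [CommRing R] [CommRing A] [Algebra R A] (bracket : A →ₗ[R] A →ₗ[R] A)

lemma bracket_swap (alt : ∀ a : A, bracket a a = 0) (a b : A) : bracket a b = -bracket b a := by
  have h := alt (a + b)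
  simp only [map_add, LinearMap.add_apply, alt, zero_add, add_zero] at h
  exact eq_neg_of_add_eq_zero_left (by rwa [add_comm] at h)

lemma bracket_mul_left (alt : ∀ a : A, bracket a a = 0)
    (leibniz : ∀ a b c : A, bracket a (b * c) = bracket a b * c + b * bracket a c) (a b c : A) :
    bracket (a * b) c = a * bracket b c + b * bracket a c := by
  rw [bracket_swap bracket alt, leibniz, bracket_swap bracket alt c, bracket_swap bracket alt c]
  ring

def hamiltonian (leibniz : ∀ a b c : A, bracket a (b * c) = bracket a b * c + b * bracket a c)
    (a : A) : Derivation R A A where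
  toLinearMap := bracket a
  map_one_eq_zero' := by simpa using leibniz a 1 1
  leibniz' b c := by
    change bracket a (b * c) = b • bracket a c + c • bracket a b
    rw [leibniz, smul_eq_mul, smul_eq_mul]
    ring

variable (leibniz : ∀ a b c : A, bracket a (b * c) = bracket a b * c + b * bracket a c)

@[simp] lemma hamiltonian_apply (a b : A) : hamiltonian bracket leibniz a b = bracket a b :=
  rfl

lemma hamiltonian_mul (alt : ∀ a : A, bracket a a = 0) (a b : A) :
    hamiltonian bracket leibniz (a * b) =
      a • hamiltonian bracket leibniz b + b • hamiltonian bracket leibniz a := by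
  ext c
  simp [bracket_mul_left bracket alt leibniz]

lemma hamiltonian_bracket
    (jacobi : ∀ a b c : A,
      bracket a (bracket b c) = bracket (bracket a b) c + bracket b (bracket a c)) (a b : A) :
    hamiltonian bracket leibniz (bracket a b) =
      ⁅hamiltonian bracket leibniz a, hamiltonian bracket leibniz b⁆ := by
  ext c
  simp only [hamiltonian_apply, Derivation.commutator_apply]
  rw [jacobi a b c]
  ring

end Poisson

section HamiltonianDivergence

variable {R A ι : Type*} [CommRing R] [CommRing A] [Algebra R A] [Fintype ι]
  (b : Module.Basis ι A Ω[A⁄R]) (x : ι → A) (bracket : A →ₗ[R] A →ₗ[R] A)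
  (leibniz : ∀ a b c : A, bracket a (b * c) = bracket a b * c + b * bracket a c)

lemma divergence_hamiltonian_mul (hb : ∀ i, b i = KaehlerDifferential.D R A (x i))
    (alt : ∀ a : A, bracket a a = 0) (a c : A) :
    divergence b x (hamiltonian bracket leibniz (a * c)) =
      a * divergence b x (hamiltonian bracket leibniz c) +
        c * divergence b x (hamiltonian bracket leibniz a) := by
  rw [hamiltonian_mul bracket leibniz alt, divergence_add, divergence_smul b x hb,
    divergence_smul b x hb, hamiltonian_apply, hamiltonian_apply, bracket_swap bracket alt c]
  ring

lemma divergence_hamiltonian_bracket (hb : ∀ i, b i = KaehlerDifferential.D R A (x i))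
    (jacobi : ∀ a b c : A,
      bracket a (bracket b c) = bracket (bracket a b) c + bracket b (bracket a c)) (a c : A) :
    divergence b x (hamiltonian bracket leibniz (bracket a c)) =
      bracket a (divergence b x (hamiltonian bracket leibniz c)) -
        bracket c (divergence b x (hamiltonian bracket leibniz a)) := by
  rw [hamiltonian_bracket bracket leibniz jacobi, divergence_lie b x hb]
  rfl

end HamiltonianDivergence

section TwistedBracket

variable {R A : Type*} [CommRing R] [CommRing A] [Algebra R A] (bracket : A →ₗ[R] A →ₗ[R] A)
  (τ : A → A)

def twistedBracket (m a : A) : A :=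
  -bracket a m + m * τ a

lemma twistedBracket_mul_right (alt : ∀ a : A, bracket a a = 0)
    (leibniz : ∀ a b c : A, bracket a (b * c) = bracket a b * c + b * bracket a c)
    (hτ : ∀ a c, τ (a * c) = a * τ c + c * τ a) (m a c : A) :
    twistedBracket bracket τ m (a * c) =
      a * twistedBracket bracket τ m c + c * twistedBracket bracket τ m a := by
  simp only [twistedBracket, bracket_mul_left bracket alt leibniz, hτ]
  ring

lemma twistedBracket_mul_left (alt : ∀ a : A, bracket a a = 0)
    (leibniz : ∀ a b c : A, bracket a (b * c) = bracket a b * c + b * bracket a c) (m a c : A) :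
    twistedBracket bracket τ (a * m) c = a * twistedBracket bracket τ m c + m * bracket a c := by
  simp only [twistedBracket, leibniz, bracket_swap bracket alt c a]
  ring

lemma twistedBracket_twistedBracket_sub
    (leibniz : ∀ a b c : A, bracket a (b * c) = bracket a b * c + b * bracket a c)
    (jacobi : ∀ a b c : A,
      bracket a (bracket b c) = bracket (bracket a b) c + bracket b (bracket a c))
    (hτ : ∀ a c, τ (bracket a c) = bracket a (τ c) - bracket c (τ a)) (m a c : A) :
    twistedBracket bracket τ (twistedBracket bracket τ m a) c -
        twistedBracket bracket τ (twistedBracket bracket τ m c) a =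
      twistedBracket bracket τ m (bracket a c) := by
  simp only [twistedBracket, map_add, map_neg, leibniz, hτ]
  linear_combination (-1 : A) * jacobi a c m

end TwistedBracket

theorem dualizing_module_right_poisson_structure_general
    (k A : Type) [Field k] [CommRing A] [Algebra k A]
    (bracket : A →ₗ[k] A →ₗ[k] A)
    (alt : ∀ a : A, bracket a a = 0)
    (jacobi : ∀ a b c : A,
      bracket a (bracket b c) = bracket (bracket a b) c + bracket b (bracket a c))
    (leibniz : ∀ a b c : A, bracket a (b * c) = bracket a b * c + b * bracket a c)
    (ℓ : ℕ) (x : Fin ℓ → A) (bas : Module.Basis (Fin ℓ) A (Ω[A⁄k]))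
    (hb : ∀ i, bas i = KaehlerDifferential.D k A (x i))
    (tr : A → A)
    (htr : ∀ y : A, tr y = ∑ i, bas.repr (KaehlerDifferential.D k A (bracket y (x i))) i)
    (bw : A → A → A)
    (hbw : ∀ m a : A, bw m a = -(bracket a m) + m * tr a) :
    (∀ m a b : A, bw m (a * b) = a * bw m b + b * bw m a) ∧
    (∀ m a b : A, bw (a * m) b = a * bw m b + m * bracket a b) ∧
    (∀ m a b : A, bw (bw m a) b - bw (bw m b) a = bw m (bracket a b)) := by
  obtain rfl : bw = twistedBracket bracket tr := funext₂ hbw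
  obtain rfl : tr = fun y ↦ divergence bas x (hamiltonian bracket leibniz y) := funext htr
  exact ⟨twistedBracket_mul_right bracket _ alt leibniz
      (divergence_hamiltonian_mul bas x bracket leibniz hb alt),
    twistedBracket_mul_left bracket _ alt leibniz,
    twistedBracket_twistedBracket_sub bracket _ leibniz jacobi
      (divergence_hamiltonian_bracket bas x bracket leibniz hb jacobi)⟩

/-- With `A` a Poisson algebra over a field `k` of characteristic 0 whose Kähler
differentials are free with basis `(dx_1, …, dx_ℓ)` and trace map `tr`, the operation
`{m, a}_ω = −{a, m} + m·tr(a)` makes `A` into a right Poisson module over `A`: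
(i) `{m, ab}_ω = a·{m, b}_ω + b·{m, a}_ω`;
(ii) `{a·m, b}_ω = a·{m, b}_ω + m·{a, b}`;
(iii) `{{m, a}_ω, b}_ω − {{m, b}_ω, a}_ω = {m, {a, b}}_ω`. -/
theorem dualizing_module_right_poisson_structure
    (k A : Type) [Field k] [CharZero k] [CommRing A] [Algebra k A]
    (bracket : A →ₗ[k] A →ₗ[k] A)
    (alt : ∀ a : A, bracket a a = 0)
    (jacobi : ∀ a b c : A,
      bracket a (bracket b c) = bracket (bracket a b) c + bracket b (bracket a c))
    (leibniz : ∀ a b c : A, bracket a (b * c) = bracket a b * c + b * bracket a c)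
    (ℓ : ℕ) (x : Fin ℓ → A) (bas : Module.Basis (Fin ℓ) A (Ω[A⁄k]))
    (hb : ∀ i, bas i = KaehlerDifferential.D k A (x i))
    (tr : A → A)
    (htr : ∀ y : A, tr y = ∑ i, bas.repr (KaehlerDifferential.D k A (bracket y (x i))) i)
    (bw : A → A → A)
    (hbw : ∀ m a : A, bw m a = -(bracket a m) + m * tr a) :
    (∀ m a b : A, bw m (a * b) = a * bw m b + b * bw m a) ∧
    (∀ m a b : A, bw (a * m) b = a * bw m b + m * bracket a b) ∧
    (∀ m a b : A, bw (bw m a) b - bw (bw m b) a = bw m (bracket a b)) :=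
  dualizing_module_right_poisson_structure_general k A bracket alt jacobi leibniz ℓ x bas hb tr htr
    bw hbw
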